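/- Let G be a topological group and let μ ∈ Meas(rG) be a uniform measure. Then the map ν ↦ μ ⋆ ν from Meas(rG) to itself is continuous when Meas(rG) is equipped with the weak-* topology, i.e., the topology of pointwise convergence on Ub(rG). (In other words, every uniform measure belongs to the topological centre of the convolution algebra Meas(rG).) -/

import Mathlib

noncomputable section

open Filter Topology

/-- `f` is a bounded uniformly continuous real-valued function,
i.e. a member of `Ub(X)`. -/
def IsUb {X : Type*} [UniformSpace X] (f : X → ℝ) : Prop :=
  UniformContinuous f ∧ ∃ C : ℝ, ∀ x, |f x| ≤ C

/-- Supremum norm of a real-valued function. -/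
def supNorm {α : Type*} (f : α → ℝ) : ℝ :=
  sSup (Set.range fun x => |f x|)

/-- `μ` is (the restriction to `Ub(X)` of) a norm-continuous linear functional on `Ub(X)`,
i.e. a member of `Meas(X)`.  It is represented as a bare map on all functions;
only its values on `Ub(X)` are relevant. -/
def IsMeas {X : Type*} [UniformSpace X] (μ : (X → ℝ) → ℝ) : Prop :=
  (∀ f g : X → ℝ, IsUb f → IsUb g → μ (f + g) = μ f + μ g) ∧
  (∀ (c : ℝ) (f : X → ℝ), IsUb f → μ (c • f) = c * μ f) ∧
  (∃ C : ℝ, ∀ f : X → ℝ, IsUb f → (∀ x, |f x| ≤ 1) → |μ f| ≤ C)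

/-- The dual norm on `Meas(X)`:  `‖μ‖ = sup {|μ f| : f ∈ Ub(X), ‖f‖ ≤ 1}`. -/
def measNorm {X : Type*} [UniformSpace X] (μ : (X → ℝ) → ℝ) : ℝ :=
  sSup {r : ℝ | ∃ f : X → ℝ, IsUb f ∧ (∀ x, |f x| ≤ 1) ∧ r = |μ f|}

/-- `μ` is a positive functional:  `μ f ≥ 0` whenever `f ∈ Ub(X)` and `f ≥ 0`. -/
def IsPositive {X : Type*} [UniformSpace X] (μ : (X → ℝ) → ℝ) : Prop :=
  ∀ f : X → ℝ, IsUb f → (∀ x, 0 ≤ f x) → 0 ≤ μ f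

/-- `μ` is a *uniform measure*: on every norm-bounded uniformly equicontinuous set
`H ⊆ Ub(X)`, `μ` is continuous for the topology of pointwise convergence. -/
def IsUniformMeasure {X : Type*} [UniformSpace X] (μ : (X → ℝ) → ℝ) : Prop :=
  ∀ H : Set (X → ℝ),
    (∃ C : ℝ, ∀ f ∈ H, ∀ x, |f x| ≤ C) →
    H.UniformEquicontinuous →
    ∀ f₀ ∈ H, ∀ ε : ℝ, 0 < ε →
      ∃ (K : Finset X) (δ : ℝ), 0 < δ ∧
        ∀ f ∈ H, (∀ x ∈ K, |f x - f₀ x| < δ) → |μ f - μ f₀| < ε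

/-- A *semiuniform* function on `X × Y`, i.e. a member of `Ub(X ⋉ Y)` where `X ⋉ Y` is the
semiuniform product: `f` is bounded, the family of sections `x ↦ f (x, y)` (for `y ∈ Y`)
is uniformly equicontinuous on `X`, and every section `y ↦ f (x, y)` is uniformly
continuous on `Y`. -/
def Semiuniform {X Y : Type*} [UniformSpace X] [UniformSpace Y] (f : X × Y → ℝ) : Prop :=
  (∃ C : ℝ, ∀ p, |f p| ≤ C) ∧
  UniformEquicontinuous (fun y : Y => fun x : X => f (x, y)) ∧
  ∀ x : X, UniformContinuous fun y : Y => f (x, y)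

/-- The direct product `μ ⊗ ν`, evaluated at `f : X × Y → ℝ`:
`(μ ⊗ ν)(f) = μ (x ↦ ν (y ↦ f (x, y)))`. -/
def dirProd {X Y : Type*} (μ : (X → ℝ) → ℝ) (ν : (Y → ℝ) → ℝ) (f : X × Y → ℝ) : ℝ :=
  μ fun x => ν fun y => f (x, y)

/-- Convolution: `(μ ⋆ ν)(f) = μ (x ↦ ν (y ↦ f (x · y)))`. -/
def conv {G : Type*} [Mul G] (μ ν : (G → ℝ) → ℝ) : (G → ℝ) → ℝ :=
  fun f => μ fun x => ν fun y => f (x * y)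

/-- The weak-* topology on `Meas(X)`: the topology of pointwise convergence on `Ub(X)`. -/
def weakStarMeas (X : Type*) [UniformSpace X] :
    TopologicalSpace {ν : (X → ℝ) → ℝ // IsMeas ν} :=
  TopologicalSpace.induced
    (fun ν => fun f : {f : X → ℝ // IsUb f} => ν.1 f.1) Pi.topologicalSpace

/-! For `f ∈ Ub(rG)` the function `(x, y) ↦ f (x * y)` is semiuniform, and a uniform measure `μ`
satisfies Fubini's theorem against every `ν ∈ Meas(Y)` on semiuniform functions:
`μ (x ↦ ν (y ↦ f (x, y))) = ν (y ↦ μ (x ↦ f (x, y)))`, where `y ↦ μ (x ↦ f (x, y))` lies in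
`Ub(Y)`. Hence `(μ ⋆ ν)(f)` is the evaluation of `ν` at a fixed element of `Ub(rG)`, which is
weak-* continuous in `ν`.

Fubini is linearity of `μ` when `ν` is a finite combination of Dirac measures. A general `ν` of
norm `≤ C` is approximated, on finitely many test functions, by such combinations of norm `≤ C`
(Hahn–Banach in a finite-dimensional space), and the functions `x ↦ m (y ↦ f (x, y))`, `m` of
norm `≤ C`, form a bounded uniformly equicontinuous set on which `μ` is pointwise continuous. -/

open Uniformity

lemma mem_closure_convexHull_of_forall_le {E : Type*} [AddCommGroup E] [Module ℝ E]
    [TopologicalSpace E] [IsTopologicalAddGroup E] [ContinuousSMul ℝ E] [LocallyConvexSpace ℝ E]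
    {s : Set E} {v : E} (h : ∀ (F : StrongDual ℝ E) (b : ℝ), (∀ w ∈ s, F w ≤ b) → F v ≤ b) :
    v ∈ closure (convexHull ℝ s) := by
  by_contra hv
  obtain ⟨F, u, hFs, hFv⟩ :=
    geometric_hahn_banach_closed_point (convex_convexHull ℝ s).closure isClosed_closure hv
  have := h F u fun w hw => (hFs w (subset_closure (subset_convexHull ℝ s hw))).le
  linarith

section Measures

variable {X : Type*} [UniformSpace X]

lemma isUb_const (c : ℝ) : IsUb (fun _ : X => c) :=
  ⟨uniformContinuous_const, |c|, fun _ => le_rfl⟩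

lemma IsUb.add {f g : X → ℝ} (hf : IsUb f) (hg : IsUb g) : IsUb (f + g) := by
  obtain ⟨hfu, Cf, hCf⟩ := hf
  obtain ⟨hgu, Cg, hCg⟩ := hg
  exact ⟨hfu.add hgu, Cf + Cg, fun x => (abs_add_le _ _).trans (add_le_add (hCf x) (hCg x))⟩

lemma IsUb.sub {f g : X → ℝ} (hf : IsUb f) (hg : IsUb g) : IsUb (f - g) := by
  obtain ⟨hfu, Cf, hCf⟩ := hf
  obtain ⟨hgu, Cg, hCg⟩ := hg
  exact ⟨hfu.sub hgu, Cf + Cg, fun x => (abs_sub _ _).trans (add_le_add (hCf x) (hCg x))⟩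

lemma IsUb.const_smul {f : X → ℝ} (hf : IsUb f) (c : ℝ) : IsUb (c • f) := by
  obtain ⟨hfu, Cf, hCf⟩ := hf
  refine ⟨hfu.const_smul c, |c| * Cf, fun x => ?_⟩
  rw [Pi.smul_apply, smul_eq_mul, abs_mul]
  exact mul_le_mul_of_nonneg_left (hCf x) (abs_nonneg c)

lemma isUb_sum {ι : Type*} (s : Finset ι) {f : ι → X → ℝ} (hf : ∀ i ∈ s, IsUb (f i)) :
    IsUb (∑ i ∈ s, f i) :=
  Finset.sum_induction f IsUb (fun _ _ => IsUb.add) (isUb_const 0) hf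

/-- `‖ν‖ ≤ C` for the dual norm of `Meas(X)`. -/
def OpNormLE (C : ℝ) (ν : (X → ℝ) → ℝ) : Prop :=
  ∀ q : X → ℝ, IsUb q → ∀ b : ℝ, 0 ≤ b → (∀ x, |q x| ≤ b) → |ν q| ≤ C * b

namespace IsMeas

variable {ν : (X → ℝ) → ℝ}

lemma map_zero (hν : IsMeas ν) : ν 0 = 0 := by
  simpa using hν.2.1 0 0 (isUb_const 0)

lemma map_sub (hν : IsMeas ν) {f g : X → ℝ} (hf : IsUb f) (hg : IsUb g) :
    ν (f - g) = ν f - ν g := by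
  rw [eq_sub_iff_add_eq, ← hν.1 _ _ (hf.sub hg) hg, sub_add_cancel]

lemma map_sum (hν : IsMeas ν) {ι : Type*} (s : Finset ι) (c : ι → ℝ) {f : ι → X → ℝ}
    (hf : ∀ i ∈ s, IsUb (f i)) : ν (∑ i ∈ s, c i • f i) = ∑ i ∈ s, c i * ν (f i) := by
  classical
  induction s using Finset.induction_on with
  | empty => simpa using hν.map_zero
  | insert i s hi ih =>
    have hfs : ∀ j ∈ s, IsUb (f j) := fun j hj => hf j (Finset.mem_insert_of_mem hj)
    have hfi : IsUb (f i) := hf i (Finset.mem_insert_self i s)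
    rw [Finset.sum_insert hi, Finset.sum_insert hi,
      hν.1 _ _ (hfi.const_smul _) (isUb_sum s fun j hj => (hfs j hj).const_smul _),
      hν.2.1 _ _ hfi, ih hfs]

lemma exists_opNormLE (hν : IsMeas ν) : ∃ C, 0 < C ∧ OpNormLE C ν := by
  obtain ⟨C, hC⟩ := hν.2.2
  refine ⟨max C 1, by positivity, fun q hq b hb hqb => ?_⟩
  rcases hb.eq_or_lt with rfl | hb
  · have hq0 : q = 0 := funext fun x => abs_nonpos_iff.1 (hqb x)
    simp [hq0, hν.map_zero]
  · have hq' : |ν (b⁻¹ • q)| ≤ C := hC _ (hq.const_smul _) fun x => by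
      rw [Pi.smul_apply, smul_eq_mul, abs_mul, abs_inv, abs_of_pos hb]
      exact inv_mul_le_one_of_le₀ (hqb x) hb.le
    calc |ν q| = b * |ν (b⁻¹ • q)| := by
          rw [hν.2.1 _ _ hq, abs_mul, abs_inv, abs_of_pos hb, mul_inv_cancel_left₀ hb.ne']
      _ ≤ max C 1 * b := by rw [mul_comm]; gcongr; exact hq'.trans (le_max_left _ _)

end IsMeas

lemma OpNormLE.abs_sub_le {C : ℝ} {ν : (X → ℝ) → ℝ} (hC : OpNormLE C ν) (hν : IsMeas ν)
    {f g : X → ℝ} (hf : IsUb f) (hg : IsUb g) {b : ℝ} (hb : 0 ≤ b)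
    (hfg : ∀ x, |f x - g x| ≤ b) : |ν f - ν g| ≤ C * b := by
  rw [← hν.map_sub hf hg]
  exact hC _ (hf.sub hg) b hb hfg

def diracSum {κ : Type*} [Fintype κ] (c : κ → ℝ) (y : κ → X) (q : X → ℝ) : ℝ :=
  ∑ k, c k * q (y k)

variable {κ : Type*} [Fintype κ] (c : κ → ℝ) (y : κ → X)

lemma opNormLE_diracSum {C : ℝ} (hc : ∑ k, |c k| ≤ C) : OpNormLE C (diracSum c y) := by
  intro q _ b hb hqb
  calc |∑ k, c k * q (y k)| ≤ ∑ k, |c k| * b := by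
        refine (Finset.abs_sum_le_sum_abs _ _).trans (Finset.sum_le_sum fun k _ => ?_)
        rw [abs_mul]
        exact mul_le_mul_of_nonneg_left (hqb _) (abs_nonneg _)
    _ ≤ C * b := by rw [← Finset.sum_mul]; exact mul_le_mul_of_nonneg_right hc hb

lemma isMeas_diracSum : IsMeas (diracSum c y) := by
  refine ⟨fun f g _ _ => ?_, fun a f _ => ?_, ∑ k, |c k|, fun f hf hf1 => ?_⟩
  · simp only [diracSum, Pi.add_apply, mul_add, Finset.sum_add_distrib]
  · simp only [diracSum, Pi.smul_apply, smul_eq_mul, Finset.mul_sum]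
    exact Finset.sum_congr rfl fun k _ => by ring
  · simpa using opNormLE_diracSum c y le_rfl f hf 1 zero_le_one hf1

end Measures

-- A linear `F` bounded by `b` on the generating vectors gives `|∑ⱼ F(eⱼ) pⱼ| ≤ b / C`
-- pointwise, hence `F (ν (p j))ⱼ = ν (∑ⱼ F(eⱼ) pⱼ) ≤ b` since `‖ν‖ ≤ C`.
lemma IsMeas.mem_closure_convexHull {X : Type*} [UniformSpace X] [Nonempty X]
    {ν : (X → ℝ) → ℝ} (hν : IsMeas ν) {C : ℝ} (hC : 0 < C) (hνC : OpNormLE C ν) {ι : Type*}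
    [Fintype ι] (p : ι → X → ℝ) (hp : ∀ j, IsUb (p j)) :
    (fun j => ν (p j)) ∈
      closure (convexHull ℝ {w | ∃ (t : ℝ) (x : X), |t| ≤ C ∧ w = t • fun j => p j x}) := by
  classical
  refine mem_closure_convexHull_of_forall_le fun F b hF => ?_
  set a : ι → ℝ := fun j => F fun j' => if j = j' then 1 else 0
  set q : X → ℝ := ∑ j, a j • p j
  have hF_apply : ∀ w, F w = ∑ j, w j * a j := fun w => by
    simpa [a] using F.toLinearMap.pi_apply_eq_sum_univ w
  have hq : IsUb q := isUb_sum _ fun j _ => (hp j).const_smul _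
  have hFS : ∀ t x, F (t • fun j => p j x) = t * q x := fun t x => by
    simp only [hF_apply, q, Finset.sum_apply, Pi.smul_apply, smul_eq_mul, Finset.mul_sum]
    exact Finset.sum_congr rfl fun j _ => by ring
  have hb : 0 ≤ b := by simpa using hF 0 ⟨0, Classical.arbitrary X, by simp [hC.le], by simp⟩
  have hqb : ∀ x, |q x| ≤ b / C := fun x => by
    have hpos := hFS C x ▸ hF _ ⟨C, x, (abs_of_pos hC).le, rfl⟩
    have hneg := hFS (-C) x ▸ hF _ ⟨-C, x, by simp [abs_of_pos hC], rfl⟩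
    rw [le_div_iff₀ hC]
    rcases abs_cases (q x) with ⟨h, _⟩ | ⟨h, _⟩ <;> rw [h] <;> linarith
  calc F (fun j => ν (p j)) = ν q := by
        rw [hν.map_sum _ _ fun j _ => hp j, hF_apply]
        exact Finset.sum_congr rfl fun j _ => mul_comm _ _
    _ ≤ C * (b / C) := (le_abs_self _).trans (hνC q hq _ (by positivity) hqb)
    _ = b := mul_div_cancel₀ _ hC.ne'

lemma IsMeas.exists_diracSum_approx {X : Type*} [UniformSpace X] {ν : (X → ℝ) → ℝ}
    (hν : IsMeas ν) {C : ℝ} (hC : 0 < C) (hνC : OpNormLE C ν) {ι : Type*} [Fintype ι]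
    (p : ι → X → ℝ) (hp : ∀ j, IsUb (p j)) {δ : ℝ} (hδ : 0 < δ) :
    ∃ (κ : Type) (_ : Fintype κ) (c : κ → ℝ) (y : κ → X),
      ∑ k, |c k| ≤ C ∧ ∀ j, |diracSum c y (p j) - ν (p j)| < δ := by
  rcases isEmpty_or_nonempty X with hX | hX
  · refine ⟨Empty, inferInstance, Empty.elim, Empty.elim, by simp [hC.le], fun j => ?_⟩
    have hpj : p j = 0 := funext fun x => isEmptyElim x
    simp [diracSum, hpj, hν.map_zero, hδ]
  have hv := hν.mem_closure_convexHull hC hνC p hp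
  obtain ⟨w, hw, hvw⟩ := Metric.mem_closure_iff.1 hv δ hδ
  obtain ⟨κ, _, l, z, hl0, hl1, hz, rfl⟩ := mem_convexHull_iff_exists_fintype.1 hw
  choose t x ht hzx using hz
  refine ⟨κ, inferInstance, fun k => l k * t k, x, ?_, fun j => ?_⟩
  · calc ∑ k, |l k * t k| ≤ ∑ k, l k * C := Finset.sum_le_sum fun k _ => by
          rw [abs_mul, abs_of_nonneg (hl0 k)]
          exact mul_le_mul_of_nonneg_left (ht k) (hl0 k)
      _ = C := by rw [← Finset.sum_mul, hl1, one_mul]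
  · have := (dist_pi_lt_iff hδ).1 hvw j
    rw [Real.dist_eq, abs_sub_comm] at this
    convert this using 3
    simp [diracSum, hzx, Finset.sum_apply, mul_assoc]

lemma UniformContinuous.comp_uniformEquicontinuous {α β γ ι : Type*} [UniformSpace α]
    [UniformSpace β] [UniformSpace γ] {g : α → γ} {F : ι → β → α} (hg : UniformContinuous g)
    (hF : UniformEquicontinuous F) : UniformEquicontinuous fun i => g ∘ F i :=
  fun _ hU => hF _ (hg hU)

section UniformMeasure

variable {X Y : Type*} [UniformSpace X] [UniformSpace Y] {f : X × Y → ℝ}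

lemma Semiuniform.isUb_left (hf : Semiuniform f) (y : Y) : IsUb fun x => f (x, y) :=
  ⟨hf.2.1.uniformContinuous y, hf.1.imp fun _ hC _ => hC _⟩

lemma Semiuniform.isUb_right (hf : Semiuniform f) (x : X) : IsUb fun y => f (x, y) :=
  ⟨hf.2.2 x, hf.1.imp fun _ hC _ => hC _⟩

lemma Semiuniform.uniformEquicontinuous_sub (hf : Semiuniform f) :
    UniformEquicontinuous fun (p : Y × Y) (x : X) => f (x, p.2) - f (x, p.1) := by
  rw [Metric.uniformEquicontinuous_iff_right]
  intro ε hε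
  filter_upwards [Metric.uniformEquicontinuous_iff_right.1 hf.2.1 (ε / 2) (half_pos hε)]
    with xx h p
  calc _ ≤ dist (f (xx.1, p.2)) (f (xx.2, p.2)) + dist (f (xx.1, p.1)) (f (xx.2, p.1)) :=
        dist_sub_sub_le _ _ _ _
    _ < ε := by linarith [h p.1, h p.2]

lemma Semiuniform.uniformEquicontinuous_apply (hf : Semiuniform f) {C : ℝ} (hC : 0 < C) :
    UniformEquicontinuous fun (m : {m : (Y → ℝ) → ℝ // IsMeas m ∧ OpNormLE C m}) (x : X) =>
      m.1 fun y => f (x, y) := by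
  rw [Metric.uniformEquicontinuous_iff_right]
  intro ε hε
  filter_upwards [Metric.uniformEquicontinuous_iff_right.1 hf.2.1 (ε / (2 * C)) (by positivity)]
    with xx h m
  calc dist _ _ ≤ C * (ε / (2 * C)) :=
        m.2.2.abs_sub_le m.2.1 (hf.isUb_right _) (hf.isUb_right _) (by positivity)
          fun y => (h y).le
    _ = ε / 2 := by field_simp
    _ < ε := half_lt_self hε

variable {μ : (X → ℝ) → ℝ}

lemma IsUniformMeasure.isUb_of_semiuniform (hμ : IsMeas μ) (hU : IsUniformMeasure μ)
    (hf : Semiuniform f) : IsUb fun y => μ fun x => f (x, y) := by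
  obtain ⟨C, -, hμC⟩ := hμ.exists_opNormLE
  obtain ⟨B, hB⟩ := hf.1
  refine ⟨?_, C * max B 0, fun y => hμC _ (hf.isUb_left y) _ (le_max_right _ _)
    fun x => (hB _).trans (le_max_left _ _)⟩
  rw [UniformContinuous, Metric.uniformity_basis_dist.tendsto_right_iff]
  intro ε hε
  rcases isEmpty_or_nonempty Y with hY | ⟨⟨y₀⟩⟩
  · exact .of_forall fun p => isEmptyElim p.1
  -- `μ` is continuous at `0` on the bounded equicontinuous family of differences of sections.
  have hD_bdd : ∃ D, ∀ g ∈ Set.range fun (p : Y × Y) (x : X) => f (x, p.2) - f (x, p.1),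
      ∀ x, |g x| ≤ D := by
    refine ⟨B + B, ?_⟩
    rintro _ ⟨p, rfl⟩ x
    exact (abs_sub _ _).trans (add_le_add (hB _) (hB _))
  obtain ⟨K, δ, hδ, hK⟩ := hU _ hD_bdd
    (uniformEquicontinuous_iff_range.1 hf.uniformEquicontinuous_sub) 0
    ⟨(y₀, y₀), funext fun _ => sub_self _⟩ ε hε
  have hclose : ∀ᶠ p in 𝓤 Y, ∀ x ∈ K, dist (f (x, p.1)) (f (x, p.2)) < δ :=
    (eventually_all_finset K).2 fun x _ =>
      uniformContinuous_iff_eventually.1 (hf.2.2 x) _ (Metric.dist_mem_uniformity hδ)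
  filter_upwards [hclose] with p hp
  have h := hK _ ⟨p, rfl⟩ fun x hx => by simpa [Real.dist_eq, abs_sub_comm] using hp x hx
  rw [hμ.map_zero, sub_zero] at h
  rwa [dist_comm, Real.dist_eq, ← hμ.map_sub (hf.isUb_left _) (hf.isUb_left _)]

end UniformMeasure

section Fubini

lemma IsMeas.dirProd_diracSum {X Y : Type*} [UniformSpace X] {f : X × Y → ℝ}
    {μ : (X → ℝ) → ℝ} (hμ : IsMeas μ) {κ : Type*} [Fintype κ] (c : κ → ℝ) (y : κ → Y)
    (hf : ∀ y', IsUb fun x => f (x, y')) :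
    dirProd μ (diracSum c y) f = diracSum c y fun y' => μ fun x => f (x, y') := by
  have hsum : (fun x => diracSum c y fun y' => f (x, y')) = ∑ k, c k • fun x => f (x, y k) := by
    funext x
    simp [diracSum, Finset.sum_apply]
  rw [dirProd, hsum, hμ.map_sum _ _ fun k _ => hf (y k)]
  rfl

variable {X Y : Type*} [UniformSpace X] [UniformSpace Y] {f : X × Y → ℝ}
  {μ : (X → ℝ) → ℝ} {ν : (Y → ℝ) → ℝ}

theorem IsUniformMeasure.dirProd_eq (hμ : IsMeas μ) (hU : IsUniformMeasure μ) (hν : IsMeas ν)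
    (hf : Semiuniform f) : dirProd μ ν f = ν fun y => μ fun x => f (x, y) := by
  obtain ⟨C, hC, hνC⟩ := hν.exists_opNormLE
  obtain ⟨B, hB⟩ := hf.1
  set g : Y → ℝ := fun y => μ fun x => f (x, y)
  set H := Set.range fun (m : {m : (Y → ℝ) → ℝ // IsMeas m ∧ OpNormLE C m}) (x : X) =>
    m.1 fun y => f (x, y)
  have hH_bdd : ∃ D, ∀ h ∈ H, ∀ x, |h x| ≤ D := by
    refine ⟨C * max B 0, ?_⟩
    rintro _ ⟨m, rfl⟩ x
    exact m.2.2 _ (hf.isUb_right x) _ (le_max_right _ _) fun y => (hB _).trans (le_max_left _ _)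
  refine eq_of_forall_dist_le fun ε hε => ?_
  obtain ⟨K, δ, hδ, hK⟩ := hU H hH_bdd
    (uniformEquicontinuous_iff_range.1 (hf.uniformEquicontinuous_apply hC))
    _ ⟨⟨ν, hν, hνC⟩, rfl⟩ (ε / 2) (half_pos hε)
  -- Approximate `ν` by a discrete measure simultaneously at `g` and at the sections over `K`.
  set p : Option K → Y → ℝ := fun o => o.elim g fun x y => f (x.1, y)
  obtain ⟨κ, _, c, y, hc, happ⟩ := hν.exists_diracSum_approx hC hνC p
    (by rintro (_ | x); exacts [hU.isUb_of_semiuniform hμ hf, hf.isUb_right x.1])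
    (lt_min hδ (half_pos hε))
  have hsections : |dirProd μ (diracSum c y) f - dirProd μ ν f| < ε / 2 :=
    hK _ ⟨⟨diracSum c y, isMeas_diracSum c y, opNormLE_diracSum c y hc⟩, rfl⟩
    fun x hx => (happ (some ⟨x, hx⟩)).trans_le (min_le_left _ _)
  have hg : |diracSum c y g - ν g| < ε / 2 := (happ none).trans_le (min_le_right _ _)
  rw [hμ.dirProd_diracSum c y hf.isUb_left] at hsections
  rw [Real.dist_eq]
  calc |dirProd μ ν f - ν g| ≤ |diracSum c y g - dirProd μ ν f| + |diracSum c y g - ν g| := by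
        rw [abs_sub_comm (diracSum c y g)]
        exact abs_sub_le _ _ _
    _ ≤ ε := by linarith

end Fubini

section RightUniformGroup

variable {G : Type*} [UniformSpace G] [Group G] [IsRightUniformGroup G]

lemma uniformEquicontinuous_mul_right : UniformEquicontinuous fun (y x : G) => x * y := by
  intro U hU
  rw [uniformity_eq_comap_nhds_one G] at hU ⊢
  obtain ⟨V, hV, hVU⟩ := mem_comap.1 hU
  filter_upwards [preimage_mem_comap hV] with p hp y
  exact hVU (by simpa [mul_div_mul_right_eq_div] using hp)

lemma IsRightUniformGroup.uniformContinuous_mul_left (x : G) :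
    UniformContinuous fun y : G => x * y := by
  rw [UniformContinuous, uniformity_eq_comap_nhds_one G, tendsto_comap_iff]
  have hconj : Tendsto (fun w : G => x * w * x⁻¹) (𝓝 1) (𝓝 1) := by
    have hcont : Continuous fun w : G => x * w * x⁻¹ := by fun_prop
    simpa using hcont.tendsto 1
  refine (hconj.comp tendsto_comap).congr fun p => ?_
  simp only [Function.comp_apply, div_eq_mul_inv, mul_inv_rev, mul_assoc]

lemma IsUb.semiuniform_mul {f : G → ℝ} (hf : IsUb f) :
    Semiuniform fun p : G × G => f (p.1 * p.2) :=
  ⟨hf.2.imp fun _ h _ => h _, hf.1.comp_uniformEquicontinuous uniformEquicontinuous_mul_right,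
    fun x => hf.1.comp (IsRightUniformGroup.uniformContinuous_mul_left x)⟩

end RightUniformGroup

theorem stmt14 {G : Type*} [Group G] [TopologicalSpace G] [IsTopologicalGroup G] :
    letI : UniformSpace G := IsTopologicalGroup.rightUniformSpace G
    ∀ μ : (G → ℝ) → ℝ, IsMeas μ → IsUniformMeasure μ →
      @Continuous {ν : (G → ℝ) → ℝ // IsMeas ν} ({f : G → ℝ // IsUb f} → ℝ)
        (weakStarMeas G) _
        (fun ν => fun f => conv μ ν.1 f.1) := by
  let _ : UniformSpace G := IsTopologicalGroup.rightUniformSpace G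
  have _ : IsRightUniformGroup G := { uniformity_eq := rfl }
  let _ := weakStarMeas G
  intro μ hμ hU
  refine continuous_pi fun f => ?_
  have hg := hU.isUb_of_semiuniform hμ f.2.semiuniform_mul
  refine ((continuous_apply (A := fun _ => ℝ) (⟨_, hg⟩ : {f : G → ℝ // IsUb f})).comp
    continuous_induced_dom).congr fun ν => ?_
  exact (hU.dirProd_eq hμ ν.2 f.2.semiuniform_mul).symm
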